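/- Let A be an n×n matrix with entries in {0,1} such that per(A) ≠ 0, and let r_i ≠ 0 be the number of ones in the i-th row (i = 1, …, n). Then for every α ≥ 1: ln_α(per(A)) ≤ Σ_{i=1}^n (1/r_i) Σ_{j=1}^{r_i} ln_α(j). -/

import Mathlib

open Finset

/-- The α-logarithm: `ln_α(ξ) = (ξ^(1-α) - 1)/(1-α)` for `α ≠ 1`, and `ln ξ` for `α = 1`. -/
noncomputable def alphaLog (α ξ : ℝ) : ℝ :=
  if α = 1 then Real.log ξ else (ξ ^ (1 - α) - 1) / (1 - α)

/-- The Tsallis–Havrda–Charvát entropy of order `α` of a pmf `p` on a finite set. -/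
noncomputable def thc (α : ℝ) {S : Type*} [Fintype S] (p : S → ℝ) : ℝ :=
  if α = 1 then -∑ s, p s * Real.log (p s)
  else ((∑ s, p s ^ α) - 1) / (1 - α)

/-- The binary THC entropy `h_α(q)`. -/
noncomputable def binThc (α q : ℝ) : ℝ :=
  if α = 1 then -(q * Real.log q) - (1 - q) * Real.log (1 - q)
  else (q ^ α + (1 - q) ^ α - 1) / (1 - α)

/-- First conditional THC entropy (Daróczy form): `H_α(X|Y) = Σ_y p(y)^α H_α(X|y)`,
where `p` is the joint pmf of `(X, Y)`.  (Terms with `p(y) = 0` vanish for `α > 0`.) -/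
noncomputable def condThc1 (α : ℝ) {SX SY : Type*} [Fintype SX] [Fintype SY]
    (p : SX × SY → ℝ) : ℝ :=
  ∑ y, (∑ x, p (x, y)) ^ α * thc α (fun x => p (x, y) / ∑ x', p (x', y))

/-- Second conditional THC entropy: `H̃_α(X|Y) = Σ_y p(y) H_α(X|y)`,
where `p` is the joint pmf of `(X, Y)`.  (Terms with `p(y) = 0` vanish.) -/
noncomputable def condThc2 (α : ℝ) {SX SY : Type*} [Fintype SX] [Fintype SY]
    (p : SX × SY → ℝ) : ℝ :=
  ∑ y, (∑ x, p (x, y)) * thc α (fun x => p (x, y) / ∑ x', p (x', y))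

/-- The pmf of a random variable `X` defined on a finite sample space with pmf `μ`. -/
noncomputable def distOf {Ω S : Type*} [Fintype Ω] [DecidableEq S]
    (μ : Ω → ℝ) (X : Ω → S) : S → ℝ :=
  fun s => ∑ ω ∈ Finset.univ.filter (fun ω => X ω = s), μ ω


/-- The permanent of a square real matrix. -/
noncomputable def matPerm {n : ℕ} (A : Matrix (Fin n) (Fin n) ℝ) : ℝ :=
  ∑ σ : Equiv.Perm (Fin n), ∏ i, A i (σ i)

/-!
Radhakrishnan's entropy proof of Brégman's theorem, with `ln_α` in place of `log`.
The permanent counts the set `M` of permutations supported on the ones of `A`. Revealing the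
values of `σ ∈ M` row by row in an order `π`, the grouping inequality for `ln_α` (valid for
`α ≥ 1`) gives `|M| ln_α |M| ≤ Σ_σ Σ_u ln_α b_u`, where `b_u` is the number of choices still
available for `σ u`. That number is at most the number of ones of row `u` in the columns `σ x`
of the rows `x` not yet revealed, and averaged over all orders `π` this count is uniform on
`{1, …, r_u}`.

For `α > 1` the grouping inequality amounts to `Σ_v w_v^(2-α) ≤ N (1 + N^(1-α) - D^(1-α))` for
`D` blocks of sizes `w_v ≥ 1` summing to `N`: by concavity of `x ↦ x^(2-α)` when `α ≤ 2`, and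
by convexity of `x ↦ x^(1-α)` together with Cauchy–Schwarz when `α ≥ 2`.
-/

lemma alphaLog_one (α : ℝ) : alphaLog α 1 = 0 := by
  simp [alphaLog]

lemma alphaLog_le_alphaLog (α : ℝ) {x y : ℝ} (hx : 0 < x) (hxy : x ≤ y) :
    alphaLog α x ≤ alphaLog α y := by
  unfold alphaLog
  split_ifs with hα
  · exact Real.log_le_log hx hxy
  rcases lt_or_gt_of_ne (sub_ne_zero.mpr (Ne.symm hα)) with hc | hc
  · exact div_le_div_of_nonpos_of_le hc.le
      (by linarith [Real.rpow_le_rpow_of_nonpos hx hxy hc.le])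
  · exact div_le_div_of_nonneg_right
      (by linarith [Real.rpow_le_rpow hx.le hxy hc.le]) hc.le

theorem ConvexOn.mul_le_chord {s : Set ℝ} {f : ℝ → ℝ} (hf : ConvexOn ℝ s f) {x y z : ℝ}
    (hx : x ∈ s) (hz : z ∈ s) (hxy : x ≤ y) (hyz : y ≤ z) :
    (z - x) * f y ≤ (z - y) * f x + (y - x) * f z := by
  rcases hxy.eq_or_lt with rfl | hxy
  · linarith
  rcases hyz.eq_or_lt with rfl | hyz
  · linarith
  exact hf.secant_mono_aux1 hx hz hxy hyz

lemma Real.convexOn_rpow_of_nonpos {p : ℝ} (hp : p ≤ 0) :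
    ConvexOn ℝ (Set.Ioi 0) fun x : ℝ => x ^ p := by
  refine ⟨convex_Ioi 0, fun x (hx : 0 < x) y (hy : 0 < y) a b ha hb hab => ?_⟩
  simp only [smul_eq_mul]
  calc (a * x + b * y) ^ p ≤ (x ^ a * y ^ b) ^ p :=
        Real.rpow_le_rpow_of_nonpos (by positivity)
          (Real.geom_mean_le_arith_mean2_weighted ha hb hx.le hy.le hab) hp
    _ = (x ^ p) ^ a * (y ^ p) ^ b := by
        rw [Real.mul_rpow (by positivity) (by positivity), ← Real.rpow_mul hx.le,
          ← Real.rpow_mul hy.le, ← Real.rpow_mul hx.le, ← Real.rpow_mul hy.le,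
          mul_comm a, mul_comm b]
    _ ≤ a * x ^ p + b * y ^ p :=
        Real.geom_mean_le_arith_mean2_weighted ha hb (by positivity) (by positivity) hab

section GroupingInequality

variable {ι : Type*} (V : Finset ι) (w : ι → ℝ)

lemma sum_rpow_le_card_mul_rpow {p : ℝ} (hp₀ : 0 ≤ p) (hp₁ : p ≤ 1) (hV : V.Nonempty)
    (hw : ∀ v ∈ V, 0 ≤ w v) :
    ∑ v ∈ V, w v ^ p ≤ #V * ((∑ v ∈ V, w v) / #V) ^ p := by
  have hD : (0 : ℝ) < #V := by exact_mod_cast hV.card_pos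
  have hJensen := (Real.concaveOn_rpow hp₀ hp₁).le_map_sum (t := V) (w := fun _ => (#V : ℝ)⁻¹)
    (p := w) (fun _ _ => by positivity) (by simp [hD.ne']) hw
  simp only [smul_eq_mul, ← Finset.mul_sum] at hJensen
  rw [inv_mul_eq_div, inv_mul_eq_div, div_le_iff₀' hD] at hJensen
  exact hJensen

lemma sum_mul_rpow_le_of_neg_one_le {c : ℝ} (hc₀ : c ≤ 0) (hc₁ : -1 ≤ c) (hV : V.Nonempty)
    (hw : ∀ v ∈ V, 1 ≤ w v) :
    ∑ v ∈ V, w v * w v ^ c ≤ (∑ v ∈ V, w v) * (1 + (∑ v ∈ V, w v) ^ c - (#V : ℝ) ^ c) := by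
  set N := ∑ v ∈ V, w v
  have hD : (1 : ℝ) ≤ #V := by exact_mod_cast hV.card_pos
  have hDN : (#V : ℝ) ≤ N := by
    simpa using Finset.card_nsmul_le_sum V w 1 hw
  have hN : 0 < N := by linarith
  have hNc : N ^ c ≤ (#V : ℝ) ^ c := Real.rpow_le_rpow_of_nonpos (by linarith) hDN hc₀
  have hDc : (#V : ℝ) ^ c ≤ 1 := Real.rpow_le_one_of_one_le_of_nonpos hD hc₀
  have hDc₀ : 0 < (#V : ℝ) ^ c := by positivity
  calc ∑ v ∈ V, w v * w v ^ c = ∑ v ∈ V, w v ^ (c + 1) :=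
        Finset.sum_congr rfl fun v hv => by
          rw [Real.rpow_add_one (by linarith [hw v hv]), mul_comm]
    _ ≤ #V * (N / #V) ^ (c + 1) :=
        sum_rpow_le_card_mul_rpow V w (by linarith) (by linarith) hV
          fun v hv => by linarith [hw v hv]
    _ = N * (N ^ c / (#V : ℝ) ^ c) := by
        rw [Real.rpow_add_one (by positivity), Real.div_rpow hN.le (by linarith)]
        field_simp
    _ ≤ N * (1 + N ^ c - (#V : ℝ) ^ c) := by
        gcongr
        rw [div_le_iff₀ hDc₀]
        nlinarith

lemma sum_mul_rpow_le_of_le_neg_one {c : ℝ} (hc : c ≤ -1) (hV : 1 < #V)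
    (hw : ∀ v ∈ V, 1 ≤ w v) :
    ∑ v ∈ V, w v * w v ^ c ≤ (∑ v ∈ V, w v) * (1 + (∑ v ∈ V, w v) ^ c - (#V : ℝ) ^ c) := by
  set N := ∑ v ∈ V, w v
  set D : ℝ := (#V : ℝ)
  have hD : 1 < D := Nat.one_lt_cast.mpr hV
  have hDN : D ≤ N := by simpa using Finset.card_nsmul_le_sum V w 1 hw
  have hN : 1 < N := by linarith
  have hNc₀ : 0 < N ^ c := by positivity
  have hNc₁ : N ^ c ≤ 1 := Real.rpow_le_one_of_one_le_of_nonpos hN.le (by linarith)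
  have hconv := Real.convexOn_rpow_of_nonpos (p := c) (by linarith)
  have hchord : ∀ v ∈ V,
      (N - 1) * (w v * w v ^ c) ≤ (N - w v) * w v + (w v - 1) * w v * N ^ c := by
    intro v hv
    have h := hconv.mul_le_chord (x := 1) (y := w v) (z := N) (Set.mem_Ioi.mpr one_pos)
      (Set.mem_Ioi.mpr (by linarith)) (hw v hv)
      (Finset.single_le_sum (fun u hu => by linarith [hw u hu]) hv)
    simp only [Real.one_rpow, mul_one] at h
    nlinarith [mul_le_mul_of_nonneg_left h (show 0 ≤ w v by linarith [hw v hv])]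
  have hsum : (N - 1) * ∑ v ∈ V, w v * w v ^ c ≤ N ^ 2 - ∑ v ∈ V, w v ^ 2
      + (∑ v ∈ V, w v ^ 2 - N) * N ^ c := by
    rw [Finset.mul_sum]
    refine (Finset.sum_le_sum hchord).trans (le_of_eq ?_)
    have expand : ∀ v, (N - w v) * w v + (w v - 1) * w v * N ^ c
        = N * w v - w v ^ 2 + N ^ c * w v ^ 2 - N ^ c * w v := fun v => by ring
    simp only [expand, Finset.sum_sub_distrib, Finset.sum_add_distrib, ← Finset.mul_sum]
    ring
  have hCS : N ^ 2 ≤ D * ∑ v ∈ V, w v ^ 2 := sq_sum_le_card_mul_sum_sq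
  have hD' : (N - 1) * (D * D ^ c) ≤ (N - D) + (D - 1) * (N * N ^ c) := by
    have h := (Real.convexOn_rpow_of_nonpos (p := c + 1) (by linarith)).mul_le_chord
      (x := 1) (y := D) (z := N) (Set.mem_Ioi.mpr one_pos) (Set.mem_Ioi.mpr (by linarith))
      hD.le hDN
    rwa [Real.one_rpow, mul_one, Real.rpow_add_one (by linarith), Real.rpow_add_one (by linarith),
      mul_comm (D ^ c), mul_comm (N ^ c)] at h
  have key : (N - 1) * D * ∑ v ∈ V, w v * w v ^ c ≤ (N - 1) * D * (N * (1 + N ^ c - D ^ c)) := by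
    linear_combination D * hsum + (1 - N ^ c) * hCS + N * hD'
  exact le_of_mul_le_mul_left key (mul_pos (by linarith) (by linarith))

lemma sum_mul_rpow_le {c : ℝ} (hc : c ≤ 0) (hw : ∀ v ∈ V, 1 ≤ w v) :
    ∑ v ∈ V, w v * w v ^ c ≤ (∑ v ∈ V, w v) * (1 + (∑ v ∈ V, w v) ^ c - (#V : ℝ) ^ c) := by
  obtain hV | hV := le_or_gt #V 1
  · obtain h | h := Nat.le_one_iff_eq_zero_or_eq_one.mp hV
    · simp [Finset.card_eq_zero.mp h]
    · obtain ⟨v, rfl⟩ := Finset.card_eq_one.mp h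
      simp
  obtain hc₁ | hc₁ := le_total (-1) c
  · exact sum_mul_rpow_le_of_neg_one_le V w hc hc₁ (Finset.card_pos.mp (by omega)) hw
  · exact sum_mul_rpow_le_of_le_neg_one V w hc₁ hV hw

lemma mul_log_sum_le (hw : ∀ v ∈ V, 0 < w v) :
    (∑ v ∈ V, w v) * Real.log (∑ v ∈ V, w v) ≤
      (∑ v ∈ V, w v) * Real.log #V + ∑ v ∈ V, w v * Real.log (w v) := by
  set N := ∑ v ∈ V, w v
  rcases V.eq_empty_or_nonempty with rfl | hV
  · simp [N]
  have hD : (0 : ℝ) < #V := by exact_mod_cast hV.card_pos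
  have hN : 0 < N := Finset.sum_pos hw hV
  have hGibbs : ∑ v ∈ V, w v * Real.log (N / (#V * w v)) ≤ 0 :=
    calc ∑ v ∈ V, w v * Real.log (N / (#V * w v))
        ≤ ∑ v ∈ V, w v * (N / (#V * w v) - 1) :=
          Finset.sum_le_sum fun v hv => mul_le_mul_of_nonneg_left
            (Real.log_le_sub_one_of_pos (by have := hw v hv; positivity)) (hw v hv).le
      _ = 0 := by
          rw [Finset.sum_congr rfl fun v hv => show w v * (N / (#V * w v) - 1) = N / #V - w v by
            field_simp [(hw v hv).ne']]
          rw [Finset.sum_sub_distrib, Finset.sum_const, nsmul_eq_mul]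
          field_simp
          ring
  have hsplit : ∀ v ∈ V, w v * Real.log (N / (#V * w v))
      = w v * Real.log N - w v * Real.log #V - w v * Real.log (w v) := fun v hv => by
    rw [Real.log_div hN.ne' (by have := hw v hv; positivity),
      Real.log_mul hD.ne' (hw v hv).ne']
    ring
  rw [Finset.sum_congr rfl hsplit, Finset.sum_sub_distrib, Finset.sum_sub_distrib,
    ← Finset.sum_mul, ← Finset.sum_mul] at hGibbs
  linarith

lemma mul_alphaLog_sum_le {α : ℝ} (hα : 1 ≤ α) (hw : ∀ v ∈ V, 1 ≤ w v) :
    (∑ v ∈ V, w v) * alphaLog α (∑ v ∈ V, w v) ≤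
      (∑ v ∈ V, w v) * alphaLog α #V + ∑ v ∈ V, w v * alphaLog α (w v) := by
  unfold alphaLog
  split_ifs with hα₁
  · exact mul_log_sum_le V w fun v hv => by linarith [hw v hv]
  have hc : 1 - α < 0 := by
    linarith [lt_of_le_of_ne hα (Ne.symm hα₁)]
  have key := sum_mul_rpow_le V w hc.le hw
  set N := ∑ v ∈ V, w v
  have hdiff : N * (((#V : ℝ) ^ (1 - α) - 1) / (1 - α))
      + ∑ v ∈ V, w v * ((w v ^ (1 - α) - 1) / (1 - α)) - N * ((N ^ (1 - α) - 1) / (1 - α))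
      = (∑ v ∈ V, w v * w v ^ (1 - α) - N * (1 + N ^ (1 - α) - (#V : ℝ) ^ (1 - α))) / (1 - α) := by
    simp only [mul_div_assoc', ← Finset.sum_div, mul_sub, Finset.sum_sub_distrib, mul_one]
    field_simp
    ring
  have := div_nonneg_of_nonpos (sub_nonpos.mpr key) hc.le
  linarith

end GroupingInequality

/-- For `L = log` this is `H(X) = H(Y) + H(X | Y) ≤ log #V + H(X | Y)`, for `X` uniform on
`∑ w_v` points and `Y` its block in a partition into blocks of sizes `w_v`. -/
def GroupingBound (β : Type*) (L : ℕ → ℝ) : Prop :=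
  ∀ (V : Finset β) (w : β → ℕ), (∀ v ∈ V, 1 ≤ w v) →
    ((∑ v ∈ V, w v : ℕ) : ℝ) * L (∑ v ∈ V, w v) ≤
      (∑ v ∈ V, w v : ℕ) * L #V + ∑ v ∈ V, (w v : ℝ) * L (w v)

lemma groupingBound_alphaLog (β : Type*) {α : ℝ} (hα : 1 ≤ α) :
    GroupingBound β fun k => alphaLog α k := by
  intro V w hw
  push_cast
  exact mul_alphaLog_sum_le V (fun v => (w v : ℝ)) hα fun v hv => by exact_mod_cast hw v hv

section ChainRule

variable {Ω β : Type*} [DecidableEq β] {m : ℕ}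

def branching (g : Fin m → Ω → β) (M : Finset Ω) (t : Fin m) (σ : Ω) : ℕ :=
  #((M.filter fun τ => ∀ s < t, g s τ = g s σ).image (g t))

lemma one_le_branching (g : Fin m → Ω → β) {M : Finset Ω} (t : Fin m) {σ : Ω} (hσ : σ ∈ M) :
    1 ≤ branching g M t σ :=
  Finset.card_pos.mpr
    ⟨g t σ, Finset.mem_image_of_mem _ (Finset.mem_filter.mpr ⟨hσ, fun _ _ => rfl⟩)⟩

lemma branching_zero (g : Fin (m + 1) → Ω → β) (M : Finset Ω) (σ : Ω) :
    branching g M 0 σ = #(M.image (g 0)) := by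
  simp [branching]

lemma branching_succ (g : Fin (m + 1) → Ω → β) (M : Finset Ω) (t : Fin m) {σ : Ω} :
    branching (fun s => g s.succ) (M.filter fun τ => g 0 τ = g 0 σ) t σ =
      branching g M t.succ σ := by
  unfold branching
  rw [Finset.filter_filter]
  congr 2
  refine Finset.filter_congr fun τ _ => ?_
  simp [Fin.forall_fin_succ, Fin.succ_pos]

theorem card_mul_le_sum_branching {L : ℕ → ℝ} (hL₁ : L 1 = 0) (hL : GroupingBound β L)
    (g : Fin m → Ω → β) (M : Finset Ω) (hM : Set.InjOn (fun σ s => g s σ) M) :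
    #M * L #M ≤ ∑ σ ∈ M, ∑ t, L (branching g M t σ) := by
  induction m generalizing M with
  | zero =>
    obtain h | h := Nat.le_one_iff_eq_zero_or_eq_one.mp
      (Finset.card_le_one.mpr fun σ hσ τ hτ => hM hσ hτ (funext fun s => s.elim0))
    · simp [h]
    · simp [h, hL₁]
  | succ m ih =>
    set V := M.image (g 0)
    set fiber := fun v => M.filter fun σ => g 0 σ = v
    have hfiber : ∀ v ∈ V, #(fiber v) * L #(fiber v) ≤
        ∑ σ ∈ fiber v, ∑ t : Fin m, L (branching g M t.succ σ) := by
      intro v hv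
      obtain ⟨σ₀, hσ₀, rfl⟩ := Finset.mem_image.mp hv
      refine (ih (fun s => g s.succ) (fiber (g 0 σ₀)) ?_).trans_eq ?_
      · intro σ hσ τ hτ hστ
        obtain ⟨hσ, hσ₀⟩ := Finset.mem_filter.mp hσ
        obtain ⟨hτ, hτ₀⟩ := Finset.mem_filter.mp hτ
        exact hM hσ hτ (funext (Fin.cases (hσ₀.trans hτ₀.symm) (congrFun hστ)))
      · refine Finset.sum_congr rfl fun σ hσ => ?_
        rw [← (Finset.mem_filter.mp hσ).2]
        simp only [fiber, branching_succ]
    have hcard : ∑ v ∈ V, #(fiber v) = #M := (Finset.card_eq_sum_card_fiberwise fun σ hσ =>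
      Finset.mem_image_of_mem _ hσ).symm
    have hgroup := hL V (fun v => #(fiber v)) fun v hv => by
      obtain ⟨σ, hσ, rfl⟩ := Finset.mem_image.mp hv
      exact Finset.card_pos.mpr ⟨σ, Finset.mem_filter.mpr ⟨hσ, rfl⟩⟩
    rw [hcard] at hgroup
    calc (#M : ℝ) * L #M
        ≤ #M * L #V + ∑ v ∈ V, ∑ σ ∈ fiber v, ∑ t : Fin m, L (branching g M t.succ σ) :=
          hgroup.trans (by gcongr with v hv; exact hfiber v hv)
      _ = ∑ σ ∈ M, (L (branching g M 0 σ) + ∑ t : Fin m, L (branching g M t.succ σ)) := by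
          rw [Finset.sum_fiberwise_of_maps_to fun σ hσ => Finset.mem_image_of_mem _ hσ,
            Finset.sum_add_distrib]
          simp [branching_zero, V]
      _ = ∑ σ ∈ M, ∑ t, L (branching g M t σ) := by
          simp only [Fin.sum_univ_succ]

end ChainRule

section Rank

variable {M : Type*} [AddCommMonoid M]

lemma sum_comp_card_filter_le {α : Type*} [LinearOrder α] (S : Finset α) (f : ℕ → M) :
    ∑ y ∈ S, f #{x ∈ S | y ≤ x} = ∑ k ∈ Finset.Icc 1 #S, f k := by
  set rank := fun y => #{x ∈ S | y ≤ x}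
  have hanti : ∀ y ∈ S, ∀ y' ∈ S, y < y' → rank y' < rank y := fun y hy y' _ hlt =>
    Finset.card_lt_card <| Finset.ssubset_iff_of_subset
      (Finset.monotone_filter_right _ fun _ _ h => hlt.le.trans h) |>.mpr
      ⟨y, by simp [hy], by simp [hlt]⟩
  have hinj : Set.InjOn rank S := fun y hy y' hy' h => by
    by_contra hne
    obtain hlt | hlt := lt_or_gt_of_ne hne
    · exact (hanti y hy y' hy' hlt).ne' h
    · exact (hanti y' hy' y hy hlt).ne h
  have himage : S.image rank = Finset.Icc 1 #S := by
    refine Finset.eq_of_subset_of_card_le (fun k hk => ?_) ?_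
    · obtain ⟨y, hy, rfl⟩ := Finset.mem_image.mp hk
      exact Finset.mem_Icc.mpr ⟨Finset.card_pos.mpr ⟨y, by simp [hy]⟩,
        Finset.card_le_card (Finset.filter_subset _ _)⟩
    · simp [Finset.card_image_of_injOn hinj]
  rw [← himage, Finset.sum_image hinj]

lemma Equiv.swap_apply_mem {ι : Type*} [DecidableEq ι] {T : Finset ι} {i j u : ι} (hi : i ∈ T)
    (hj : j ∈ T) :
    Equiv.swap i j u ∈ T ↔ u ∈ T := by
  rw [Equiv.swap_apply_def]
  split_ifs with h₁ h₂ <;> simp_all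

variable {ι : Type*} [Fintype ι] [LinearOrder ι]

lemma sum_perm_comp_card_filter_le_congr {T : Finset ι} {i j : ι} (hi : i ∈ T) (hj : j ∈ T)
    (f : ℕ → M) :
    ∑ π : Equiv.Perm ι, f #{u ∈ T | π i ≤ π u} = ∑ π : Equiv.Perm ι, f #{u ∈ T | π j ≤ π u} := by
  refine Fintype.sum_equiv (Equiv.mulRight (Equiv.swap i j)) _ _ fun π => congrArg f ?_
  refine Finset.card_equiv (Equiv.swap i j) fun u => ?_
  simp [Equiv.swap_apply_mem hi hj, Equiv.Perm.mul_apply, Equiv.swap_apply_self]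

lemma card_smul_sum_perm_comp_card_filter_le {T : Finset ι} {i : ι} (hi : i ∈ T) (f : ℕ → M) :
    #T • ∑ π : Equiv.Perm ι, f #{u ∈ T | π i ≤ π u} =
      Fintype.card (Equiv.Perm ι) • ∑ k ∈ Finset.Icc 1 #T, f k := by
  calc #T • ∑ π : Equiv.Perm ι, f #{u ∈ T | π i ≤ π u}
      = ∑ j ∈ T, ∑ π : Equiv.Perm ι, f #{u ∈ T | π j ≤ π u} := by
        rw [Finset.sum_congr rfl fun j hj => sum_perm_comp_card_filter_le_congr hj hi f,
          Finset.sum_const]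
    _ = ∑ π : Equiv.Perm ι, ∑ y ∈ T.map π.toEmbedding, f #{x ∈ T.map π.toEmbedding | y ≤ x} := by
        rw [Finset.sum_comm]
        refine Finset.sum_congr rfl fun π _ => ?_
        simp [Finset.filter_map, Finset.card_map]
    _ = Fintype.card (Equiv.Perm ι) • ∑ k ∈ Finset.Icc 1 #T, f k := by
        simp [sum_comp_card_filter_le, Finset.card_univ]

end Rank

section Permanent

open Equiv

variable {n : ℕ} (A : Matrix (Fin n) (Fin n) ℝ)

noncomputable def permsOnOnes : Finset (Perm (Fin n)) := {σ | ∀ u, A u (σ u) = 1}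

lemma matPerm_eq_card_permsOnOnes (h01 : ∀ i j, A i j = 0 ∨ A i j = 1) :
    matPerm A = #(permsOnOnes A) := by
  rw [matPerm, permsOnOnes, Finset.card_filter, Nat.cast_sum]
  refine Finset.sum_congr rfl fun σ _ => ?_
  split_ifs with h
  · rw [Nat.cast_one]
    exact Finset.prod_eq_one fun u _ => h u
  · obtain ⟨u, hu⟩ := not_forall.mp h
    rw [Nat.cast_zero]
    exact Finset.prod_eq_zero (f := fun i => A i (σ i)) (Finset.mem_univ u)
      ((h01 u (σ u)).resolve_right hu)

variable {A}

/-- Processing the rows in the order `π`, the choices for the image of row `u` avoid the columns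
already used by earlier rows. -/
lemma branching_le_card (π σ : Perm (Fin n)) (u : Fin n) :
    branching (fun t τ => τ (π.symm t)) (permsOnOnes A) (π u) σ ≤
      #{x ∈ {x | A u (σ x) = 1} | π u ≤ π x} := by
  refine Finset.card_le_card_of_injOn σ.symm (fun j hj => ?_) σ.symm.injective.injOn
  obtain ⟨τ, hτ, rfl⟩ := Finset.mem_image.mp hj
  simp only [permsOnOnes, Finset.mem_filter, Finset.mem_univ, true_and] at hτ
  simp only [Finset.coe_filter, Finset.mem_filter, Finset.mem_univ, true_and,
    Equiv.symm_apply_apply]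
  refine ⟨by simpa using hτ.1 u, not_lt.mp fun hlt => ?_⟩
  have hagree := hτ.2 (π (σ.symm (τ u))) hlt
  simp only [Equiv.symm_apply_apply, Equiv.apply_symm_apply] at hagree
  exact hlt.ne (congrArg π (τ.injective hagree))

variable {L : ℕ → ℝ}

lemma card_mul_le_sum_card_filter (hL₁ : L 1 = 0) (hL : GroupingBound (Fin n) L)
    (hmono : MonotoneOn L (Set.Ici 1)) (π : Perm (Fin n)) :
    #(permsOnOnes A) * L #(permsOnOnes A) ≤
      ∑ σ ∈ permsOnOnes A, ∑ u, L #{x ∈ {x | A u (σ x) = 1} | π u ≤ π x} := by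
  refine (card_mul_le_sum_branching hL₁ hL (fun t τ => τ (π.symm t)) _ ?_).trans ?_
  · exact fun σ _ τ _ h => Equiv.ext fun u => by simpa using congrFun h (π u)
  · refine Finset.sum_le_sum fun σ hσ => ?_
    rw [← Equiv.sum_comp π]
    refine Finset.sum_le_sum fun u _ => hmono (one_le_branching _ _ hσ) ?_ (branching_le_card π σ u)
    exact (one_le_branching _ _ hσ).trans (branching_le_card π σ u)

lemma sum_perm_comp_card_filter {σ : Perm (Fin n)} (hσ : σ ∈ permsOnOnes A) (u : Fin n)
    (f : ℕ → ℝ) :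
    ∑ π : Perm (Fin n), f #{x ∈ {x | A u (σ x) = 1} | π u ≤ π x} =
      Fintype.card (Perm (Fin n)) *
        ((1 / (#{j | A u j = 1} : ℝ)) * ∑ k ∈ Finset.Icc 1 #{j | A u j = 1}, f k) := by
  have hcard : #{x | A u (σ x) = 1} = #{j | A u j = 1} := Finset.card_equiv σ (by simp)
  have hmem : u ∈ ({x | A u (σ x) = 1} : Finset (Fin n)) := by
    simp only [permsOnOnes, Finset.mem_filter, Finset.mem_univ, true_and] at hσ
    simp [hσ u]
  have hpos : (0 : ℝ) < #{j | A u j = 1} := by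
    rw [← hcard]
    exact_mod_cast Finset.card_pos.mpr ⟨u, hmem⟩
  have h := card_smul_sum_perm_comp_card_filter_le hmem f
  rw [hcard, nsmul_eq_mul, nsmul_eq_mul] at h
  field_simp
  linarith

theorem bregman_of_groupingBound (hL₁ : L 1 = 0) (hL : GroupingBound (Fin n) L)
    (hmono : MonotoneOn L (Set.Ici 1)) (hne : (permsOnOnes A).Nonempty) :
    L #(permsOnOnes A) ≤
      ∑ u, (1 / (#{j | A u j = 1} : ℝ)) * ∑ k ∈ Finset.Icc 1 #{j | A u j = 1}, L k := by
  set M := permsOnOnes A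
  set P : ℝ := (Fintype.card (Perm (Fin n)) : ℝ)
  set B := ∑ u, (1 / (#{j | A u j = 1} : ℝ)) * ∑ k ∈ Finset.Icc 1 #{j | A u j = 1}, L k
  have hP : 0 < P := by positivity
  have hM : (0 : ℝ) < #M := by exact_mod_cast hne.card_pos
  have key : P * (#M * L #M) ≤ P * (#M * B) :=
    calc P * (#M * L #M) = ∑ _π : Perm (Fin n), #M * L #M := by
          rw [Finset.sum_const, Finset.card_univ, nsmul_eq_mul]
      _ ≤ ∑ π : Perm (Fin n), ∑ σ ∈ M, ∑ u, L #{x ∈ {x | A u (σ x) = 1} | π u ≤ π x} :=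
          Finset.sum_le_sum fun π _ => card_mul_le_sum_card_filter hL₁ hL hmono π
      _ = ∑ σ ∈ M, ∑ u, ∑ π : Perm (Fin n), L #{x ∈ {x | A u (σ x) = 1} | π u ≤ π x} := by
          rw [Finset.sum_comm]
          exact Finset.sum_congr rfl fun σ _ => Finset.sum_comm
      _ = ∑ σ ∈ M, ∑ u, P * ((1 / (#{j | A u j = 1} : ℝ)) *
            ∑ k ∈ Finset.Icc 1 #{j | A u j = 1}, L k) :=
          Finset.sum_congr rfl fun σ hσ => Finset.sum_congr rfl fun u _ =>
            sum_perm_comp_card_filter hσ u L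
      _ = P * (#M * B) := by
          simp only [← Finset.mul_sum, Finset.sum_const, nsmul_eq_mul, B]
  exact le_of_mul_le_mul_left (le_of_mul_le_mul_left key hP) hM

end Permanent

theorem alphaLog_permanent_le_general (n : ℕ) (A : Matrix (Fin n) (Fin n) ℝ)
    (h01 : ∀ i j, A i j = 0 ∨ A i j = 1)
    (hper : matPerm A ≠ 0)
    (r : Fin n → ℕ)
    (hr : ∀ i, r i = (Finset.univ.filter (fun j => A i j = 1)).card)
    (α : ℝ) (hα : 1 ≤ α) :
    alphaLog α (matPerm A) ≤
      ∑ i, (1 / (r i : ℝ)) * ∑ j ∈ Finset.Icc 1 (r i), alphaLog α (j : ℝ) := by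
  obtain rfl : r = fun i => #{j | A i j = 1} := funext hr
  rw [matPerm_eq_card_permsOnOnes A h01] at hper ⊢
  have hne : (permsOnOnes A).Nonempty := Finset.card_ne_zero.mp (mod_cast hper)
  have hmono : MonotoneOn (fun k : ℕ => alphaLog α k) (Set.Ici 1) := fun a ha b _ hab =>
    alphaLog_le_alphaLog α (by exact_mod_cast (Set.mem_Ici.mp ha)) (by exact_mod_cast hab)
  exact bregman_of_groupingBound (L := fun k => alphaLog α k) (by simp [alphaLog_one])
    (groupingBound_alphaLog _ hα) hmono hne

/-- Let `A` be an `n×n` `(0,1)`-matrix with `per(A) ≠ 0` and let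
`r i ≠ 0` be the number of ones in row `i`.  For every `α ≥ 1`:
`ln_α (per A) ≤ Σ_i (1/r_i) Σ_{j=1}^{r_i} ln_α j`. -/
theorem alphaLog_permanent_le (n : ℕ) (A : Matrix (Fin n) (Fin n) ℝ)
    (h01 : ∀ i j, A i j = 0 ∨ A i j = 1)
    (hper : matPerm A ≠ 0)
    (r : Fin n → ℕ)
    (hr : ∀ i, r i = (Finset.univ.filter (fun j => A i j = 1)).card)
    (hr0 : ∀ i, r i ≠ 0)
    (α : ℝ) (hα : 1 ≤ α) :
    alphaLog α (matPerm A) ≤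
      ∑ i, (1 / (r i : ℝ)) * ∑ j ∈ Finset.Icc 1 (r i), alphaLog α (j : ℝ) :=
  alphaLog_permanent_le_general n A h01 hper r hr α hα
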